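/- For ν > 0 and α ∈ ℝ with 2|α| < ν, the polynomials I_n evaluated at (z, z̄) with ξ = 0 satisfy the orthogonality relation ∫_ℂ I_m(z,z̄|0) · conj(I_n(z,z̄|0)) · exp(-ν|z|² + α(z² + z̄²)) dA(z) = (π ν^n n! / √(ν² - 4α²)) · δ_{m,n}, where dA is Lebesgue measure on ℂ ≅ ℝ². -/

import Mathlib

open Complex

noncomputable def Ic (ν α ξ z w : ℂ) : ℕ → ℂ
  | 0 => 1
  | 1 => ν * w - 2 * α * z - ξ
  | (n + 2) => (ν * w - 2 * α * z - ξ) * Ic ν α ξ z w (n + 1)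
      + 2 * α * (n + 1) * Ic ν α ξ z w n

open MeasureTheory

/-!
With the Wirtinger derivative `∂ = (∂ₓ - i ∂_y) / 2`, the weight satisfies `∂W = -I₁ W`, and the
recurrence gives `∂I_n = -2αn I_{n-1}`, `∂̄I_n = νn I_{n-1}`; hence `I_{m+1} W = -∂(I_m W)`.
Integrating by parts (no boundary terms: `W` decays like a Gaussian because `2|α| < ν`) moves `∂`
onto `conj I_k`, and `∂ conj I_k = νk conj I_{k-1}`. So the Gram matrix
`G(m, k) = ∫ I_m conj I_k W` satisfies `G(m+1, k) = νk G(m, k-1)`, which vanishes for `k = 0`;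
`G` is Hermitian, and `G(0, 0) = ∫ exp(-(ν-2α)x² - (ν+2α)y²) = π / √(ν² - 4α²)`.
-/

open ComplexConjugate

lemma one_add_pow_mul_exp_neg_mul_sq_le {c r : ℝ} (k : ℕ) (hc : 0 < c) (hr : 0 ≤ r) :
    (1 + r) ^ k * Real.exp (-c * r ^ 2) ≤
      Real.exp (k ^ 2 / (2 * c)) * Real.exp (-(c / 2) * r ^ 2) := by
  have hpow : (1 + r) ^ k ≤ Real.exp (k * r) := by
    rw [Real.exp_nat_mul]
    exact pow_le_pow_left₀ (by linarith) (by linarith [Real.add_one_le_exp r]) k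
  have hsq : k ^ 2 / (2 * c) - c / 2 * r ^ 2 - (k * r - c * r ^ 2) =
      (c * r - k) ^ 2 / (2 * c) := by
    field_simp
    ring
  calc (1 + r) ^ k * Real.exp (-c * r ^ 2) ≤ Real.exp (k * r) * Real.exp (-c * r ^ 2) := by
        gcongr
    _ ≤ Real.exp (k ^ 2 / (2 * c)) * Real.exp (-(c / 2) * r ^ 2) := by
      rw [← Real.exp_add, ← Real.exp_add, Real.exp_le_exp]
      linarith [div_nonneg (sq_nonneg (c * r - k)) (by positivity : (0 : ℝ) ≤ 2 * c)]

section InnerProductSpace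

variable {V : Type*} [NormedAddCommGroup V] [InnerProductSpace ℝ V] [FiniteDimensional ℝ V]
  [MeasurableSpace V] [BorelSpace V]

theorem integrable_exp_neg_mul_sq_norm {c : ℝ} (hc : 0 < c) :
    Integrable fun v : V => Real.exp (-c * ‖v‖ ^ 2) := by
  simpa [Complex.norm_exp, ← ofReal_pow] using
    (GaussianFourier.integrable_cexp_neg_mul_sq_norm_add (b := (c : ℂ)) (by simpa using hc) 0
      (0 : V)).norm

theorem Function.HasTemperateGrowth.integrable_mul_of_norm_le_exp_neg_mul_sq {f g : V → ℂ}
    (hf : f.HasTemperateGrowth) (hg : AEStronglyMeasurable g) {c : ℝ} (hc : 0 < c)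
    (hgc : ∀ v, ‖g v‖ ≤ Real.exp (-c * ‖v‖ ^ 2)) : Integrable fun v => f v * g v := by
  obtain ⟨k, C, hC0, hC⟩ := hf.norm_iteratedFDeriv_le_uniform 0
  have hfC : ∀ v, ‖f v‖ ≤ C * (1 + ‖v‖) ^ k := fun v => by
    simpa using hC 0 le_rfl v
  refine ((integrable_exp_neg_mul_sq_norm (half_pos hc)).const_mul
    (C * Real.exp (k ^ 2 / (2 * c)))).mono' (hf.1.continuous.aestronglyMeasurable.mul hg)
    (ae_of_all _ fun v => ?_)
  calc ‖f v * g v‖ ≤ C * (1 + ‖v‖) ^ k * Real.exp (-c * ‖v‖ ^ 2) := by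
        rw [norm_mul]
        exact mul_le_mul (hfC v) (hgc v) (norm_nonneg _) (by positivity)
    _ ≤ C * (Real.exp (k ^ 2 / (2 * c)) * Real.exp (-(c / 2) * ‖v‖ ^ 2)) := by
        rw [mul_assoc]
        exact mul_le_mul_of_nonneg_left
          (one_add_pow_mul_exp_neg_mul_sq_le k hc (norm_nonneg v)) hC0
    _ = _ := by ring

end InnerProductSpace

theorem integral_exp_neg_mul_re_sq_sub_mul_im_sq {a b : ℝ} (ha : 0 ≤ a) :
    ∫ z : ℂ, Real.exp (-a * z.re ^ 2 - b * z.im ^ 2) = Real.pi / √(a * b) := by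
  have := Complex.volume_preserving_equiv_real_prod.integral_comp'
    (fun p : ℝ × ℝ => Real.exp (-a * p.1 ^ 2) * Real.exp (-b * p.2 ^ 2))
  simp only [measurableEquivRealProd_apply, Measure.volume_eq_prod] at this
  simp only [sub_eq_add_neg, ← neg_mul, Real.exp_add]
  rw [this, integral_prod_mul (fun x : ℝ => Real.exp (-a * x ^ 2))
    (fun y : ℝ => Real.exp (-b * y ^ 2)), integral_gaussian, integral_gaussian,
    ← Real.sqrt_mul (by positivity), div_mul_div_comm, Real.sqrt_div (by positivity),
    ← sq, Real.sqrt_sq Real.pi_pos.le]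

/-- The real derivative of a function with Wirtinger derivatives `∂f = a` and `∂̄f = b`. -/
noncomputable def wirtingerCLM (a b : ℂ) : ℂ →L[ℝ] ℂ :=
  a • ContinuousLinearMap.id ℝ ℂ + b • (conjCLE : ℂ →L[ℝ] ℂ)

@[simp]
lemma wirtingerCLM_apply (a b h : ℂ) : wirtingerCLM a b h = a * h + b * conj h := rfl

theorem integral_wirtinger_mul_eq_neg_integral_mul_wirtinger {f g a b c d : ℂ → ℂ}
    (hf : ∀ z, HasFDerivAt f (wirtingerCLM (a z) (b z)) z)
    (hg : ∀ z, HasFDerivAt g (wirtingerCLM (c z) (d z)) z)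
    (hag : Integrable fun z => a z * g z) (hbg : Integrable fun z => b z * g z)
    (hfc : Integrable fun z => f z * c z) (hfd : Integrable fun z => f z * d z)
    (hfg : Integrable fun z => f z * g z) :
    ∫ z, a z * g z = -∫ z, f z * c z := by
  have ibp (v : ℂ) : (∫ z, f z * c z) * v + (∫ z, f z * d z) * conj v =
      -((∫ z, a z * g z) * v + (∫ z, b z * g z) * conj v) := by
    have hf'g : Integrable fun z => a z * g z * v + b z * g z * conj v :=
      (hag.mul_const v).add (hbg.mul_const (conj v))
    have hfg' : Integrable fun z => f z * c z * v + f z * d z * conj v :=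
      (hfc.mul_const v).add (hfd.mul_const (conj v))
    have h := integral_bilinear_hasFDerivAt_right_eq_neg_left_of_integrable (μ := volume)
      (B := ContinuousLinearMap.mul ℝ ℂ) (v := v) (f' := fun z => wirtingerCLM (a z) (b z))
      (g' := fun z => wirtingerCLM (c z) (d z))
      (by
        refine hf'g.congr (ae_of_all _ fun z => ?_)
        simp only [ContinuousLinearMap.mul_apply', wirtingerCLM_apply]
        ring)
      (by
        refine hfg'.congr (ae_of_all _ fun z => ?_)
        simp only [ContinuousLinearMap.mul_apply', wirtingerCLM_apply]
        ring)
      hfg (fun z _ => hf z) (fun z _ => hg z)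
    simp only [ContinuousLinearMap.mul_apply', wirtingerCLM_apply, mul_add, add_mul,
      ← mul_assoc, mul_right_comm _ v, mul_right_comm _ (conj v)] at h
    rwa [integral_add (hfc.mul_const v) (hfd.mul_const _), integral_add (hag.mul_const v)
      (hbg.mul_const _), integral_mul_const, integral_mul_const, integral_mul_const,
      integral_mul_const] at h
  have h1 := ibp 1
  have hI := ibp I
  simp only [map_one, mul_one] at h1
  simp only [conj_I, mul_neg] at hI
  have hI' : (∫ z, f z * c z) - ∫ z, f z * d z = -((∫ z, a z * g z) - ∫ z, b z * g z) :=
    mul_right_cancel₀ I_ne_zero (by linear_combination hI)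
  linear_combination (h1 + hI') / 2

namespace ComplexHermite

open Function

variable (ν α : ℝ)

noncomputable def poly (n : ℕ) (z : ℂ) : ℂ := Ic ν α 0 z (conj z) n

noncomputable def weight (z : ℂ) : ℂ :=
  cexp (-(ν : ℂ) * ((‖z‖ : ℝ) : ℂ) ^ 2 + α * (z ^ 2 + conj z ^ 2))

noncomputable def gram (m n : ℕ) : ℂ := ∫ z, poly ν α m z * conj (poly ν α n z) * weight ν α z

variable {ν α}

lemma poly_zero : poly ν α 0 = 1 := rfl

lemma poly_one (z : ℂ) : poly ν α 1 z = ν * conj z - 2 * α * z := sub_zero _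

lemma poly_add_two (n : ℕ) (z : ℂ) :
    poly ν α (n + 2) z = poly ν α 1 z * poly ν α (n + 1) z + 2 * α * (n + 1) * poly ν α n z :=
  rfl

lemma poly_succ (n : ℕ) (z : ℂ) :
    poly ν α (n + 1) z = poly ν α 1 z * poly ν α n z + 2 * α * n * poly ν α (n - 1) z := by
  cases n with
  | zero => simp [poly_zero]
  | succ n => rw [poly_add_two]; push_cast; ring

lemma hasTemperateGrowth_poly_one : (poly ν α 1).HasTemperateGrowth := by
  have h : poly ν α 1 = (fun _ : ℂ => (ν : ℂ)) * ⇑conjCLE - (fun _ : ℂ => 2 * (α : ℂ)) * id :=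
    funext poly_one
  rw [h]
  exact ((HasTemperateGrowth.const _).mul conjCLE.hasTemperateGrowth).sub
    ((HasTemperateGrowth.const _).mul .id)

lemma hasTemperateGrowth_poly (n : ℕ) : (poly ν α n).HasTemperateGrowth := by
  induction n using Nat.twoStepInduction with
  | zero => exact HasTemperateGrowth.const 1
  | one => exact hasTemperateGrowth_poly_one
  | more n h0 h1 =>
    have h : poly ν α (n + 2) = poly ν α 1 * poly ν α (n + 1) +
        (fun _ : ℂ => 2 * (α : ℂ) * (n + 1)) * poly ν α n :=
      funext (poly_add_two n)
    rw [h]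
    exact (hasTemperateGrowth_poly_one.mul h1).add ((HasTemperateGrowth.const _).mul h0)

lemma hasFDerivAt_poly_one (z : ℂ) :
    HasFDerivAt (poly ν α 1) (wirtingerCLM (-2 * α) ν) z := by
  have h : poly ν α 1 = fun z => (ν : ℂ) * conj z - 2 * α * z := funext poly_one
  rw [h]
  refine ((((conjCLE : ℂ →L[ℝ] ℂ).hasFDerivAt (x := z)).const_mul (ν : ℂ)).sub
    ((hasFDerivAt_id (𝕜 := ℝ) z).const_mul (2 * (α : ℂ)))).congr_fderiv ?_
  ext h
  simp
  ring

lemma hasFDerivAt_poly (n : ℕ) (z : ℂ) :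
    HasFDerivAt (poly ν α n)
      (wirtingerCLM (-2 * α * n * poly ν α (n - 1) z) (ν * n * poly ν α (n - 1) z)) z := by
  induction n using Nat.twoStepInduction with
  | zero =>
    refine (hasFDerivAt_const (𝕜 := ℝ) (1 : ℂ) z).congr_fderiv ?_
    ext h
    simp
  | one => simpa [poly_zero] using hasFDerivAt_poly_one z
  | more n h0 h1 =>
    have h : poly ν α (n + 2) = fun z => poly ν α 1 z * poly ν α (n + 1) z +
        2 * α * (n + 1) * poly ν α n z :=
      funext (poly_add_two n)
    rw [h]
    refine (((hasFDerivAt_poly_one z).mul h1).add (h0.const_mul _)).congr_fderiv ?_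
    ext h
    simp
    linear_combination (-((n : ℂ) + 1) * (ν * conj h - 2 * α * h)) * poly_succ n z

lemma weight_eq_cexp :
    weight ν α = fun z => cexp (-(ν : ℂ) * (z * conj z) + α * (z ^ 2 + conj z ^ 2)) := by
  funext z
  rw [weight, mul_conj, normSq_eq_norm_sq]
  push_cast
  rfl

lemma weight_eq_ofReal (z : ℂ) :
    weight ν α z = Real.exp (-(ν - 2 * α) * z.re ^ 2 - (ν + 2 * α) * z.im ^ 2) := by
  simp only [weight_eq_cexp, ofReal_exp]
  congr 1
  apply Complex.ext <;> simp [sq] <;> ring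

lemma conj_weight (z : ℂ) : conj (weight ν α z) = weight ν α z := by
  rw [weight_eq_ofReal, conj_ofReal]

lemma norm_weight_le (z : ℂ) : ‖weight ν α z‖ ≤ Real.exp (-(ν - 2 * |α|) * ‖z‖ ^ 2) := by
  rw [weight_eq_ofReal, norm_real, Real.norm_eq_abs, Real.abs_exp, Real.exp_le_exp,
    ← normSq_eq_norm_sq, normSq_apply]
  nlinarith [neg_abs_le α, le_abs_self α, sq_nonneg z.re, sq_nonneg z.im]

lemma hasFDerivAt_weight (z : ℂ) :
    HasFDerivAt (weight ν α)
      (wirtingerCLM (-poly ν α 1 z * weight ν α z) (-conj (poly ν α 1 z) * weight ν α z)) z := by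
  have hid := hasFDerivAt_id (𝕜 := ℝ) z
  have hconj := (conjCLE : ℂ →L[ℝ] ℂ).hasFDerivAt (x := z)
  rw [weight_eq_cexp]
  refine ((((hid.mul hconj).const_mul (-(ν : ℂ))).add
    (((hid.pow 2).add (hconj.pow 2)).const_mul (α : ℂ))).cexp).congr_fderiv ?_
  ext h
  simp [poly_one, map_ofNat]
  ring

lemma continuous_weight : Continuous (weight ν α) :=
  continuous_iff_continuousAt.2 fun z => (hasFDerivAt_weight z).continuousAt

lemma integrable_of_eq_mul_weight (hνα : 2 * |α| < ν) {f F : ℂ → ℂ}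
    (hf : f.HasTemperateGrowth) (hF : ∀ z, F z = f z * weight ν α z) : Integrable F := by
  rw [funext hF]
  exact hf.integrable_mul_of_norm_le_exp_neg_mul_sq continuous_weight.aestronglyMeasurable
    (by linarith) norm_weight_le

lemma hasTemperateGrowth_conj_poly (n : ℕ) :
    (fun z => conj (poly ν α n z)).HasTemperateGrowth :=
  conjCLE.hasTemperateGrowth.comp (hasTemperateGrowth_poly n)

lemma hasFDerivAt_conj_poly (n : ℕ) (z : ℂ) :
    HasFDerivAt (fun z => conj (poly ν α n z))
      (wirtingerCLM (ν * n * conj (poly ν α (n - 1) z)) (-2 * α * n * conj (poly ν α (n - 1) z)))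
      z := by
  refine (((conjCLE : ℂ →L[ℝ] ℂ).hasFDerivAt (x := poly ν α n z)).comp z
    (hasFDerivAt_poly n z)).congr_fderiv ?_
  ext h
  simp [map_ofNat]
  ring

lemma hasFDerivAt_poly_mul_weight (m : ℕ) (z : ℂ) :
    HasFDerivAt (fun z => poly ν α m z * weight ν α z)
      (wirtingerCLM (-(poly ν α (m + 1) z * weight ν α z))
        ((ν * m * poly ν α (m - 1) z - poly ν α m z * conj (poly ν α 1 z)) * weight ν α z)) z := by
  refine ((hasFDerivAt_poly m z).mul (hasFDerivAt_weight z)).congr_fderiv ?_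
  ext h
  simp
  linear_combination (h * weight ν α z) * poly_succ m z

lemma conj_gram (m n : ℕ) : conj (gram ν α m n) = gram ν α n m := by
  rw [gram, gram, ← integral_conj]
  congr 1
  funext z
  simp only [map_mul, conj_conj, conj_weight]
  ring

lemma gram_succ (hνα : 2 * |α| < ν) (m k : ℕ) :
    gram ν α (m + 1) k = ν * k * gram ν α m (k - 1) := by
  have hP := hasTemperateGrowth_poly (ν := ν) (α := α)
  have hQ := hasTemperateGrowth_conj_poly (ν := ν) (α := α)
  have ibp := integral_wirtinger_mul_eq_neg_integral_mul_wirtinger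
    (hasFDerivAt_poly_mul_weight m) (hasFDerivAt_conj_poly k)
    (integrable_of_eq_mul_weight hνα ((hP (m + 1)).mul (hQ k)).neg fun z => by
      simp only [Pi.neg_apply, Pi.mul_apply]; ring)
    (integrable_of_eq_mul_weight hνα
      ((((HasTemperateGrowth.const ((ν : ℂ) * m)).mul (hP (m - 1))).sub
        ((hP m).mul (hQ 1))).mul (hQ k)) fun z => by
      simp only [Pi.sub_apply, Pi.mul_apply]; ring)
    (integrable_of_eq_mul_weight hνα
      ((hP m).mul ((HasTemperateGrowth.const ((ν : ℂ) * k)).mul (hQ (k - 1)))) fun z => by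
      simp only [Pi.mul_apply]; ring)
    (integrable_of_eq_mul_weight hνα
      ((hP m).mul ((HasTemperateGrowth.const (-2 * (α : ℂ) * k)).mul (hQ (k - 1))))
      fun z => by simp only [Pi.mul_apply]; ring)
    (integrable_of_eq_mul_weight hνα ((hP m).mul (hQ k)) fun z => by
      simp only [Pi.mul_apply]; ring)
  calc gram ν α (m + 1) k
      = -∫ z, -(poly ν α (m + 1) z * weight ν α z) * conj (poly ν α k z) := by
        rw [gram, ← integral_neg]
        congr 1
        funext z
        ring
    _ = ∫ z, poly ν α m z * weight ν α z * (ν * k * conj (poly ν α (k - 1) z)) := by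
        rw [ibp, neg_neg]
    _ = ν * k * gram ν α m (k - 1) := by
        rw [gram, ← integral_const_mul]
        congr 1
        funext z
        ring

lemma gram_zero_zero (hνα : 2 * |α| < ν) :
    gram ν α 0 0 = ((Real.pi / √(ν ^ 2 - 4 * α ^ 2) : ℝ) : ℂ) := by
  simp only [gram, poly_zero, Pi.one_apply, map_one, one_mul, weight_eq_ofReal,
    integral_complex_ofReal]
  rw [integral_exp_neg_mul_re_sq_sub_mul_im_sq (by cases abs_cases α <;> linarith)]
  ring_nf

lemma gram_eq (hνα : 2 * |α| < ν) (m n : ℕ) :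
    gram ν α m n = ((Real.pi * ν ^ n * n.factorial / √(ν ^ 2 - 4 * α ^ 2) : ℝ) : ℂ) *
      (if m = n then 1 else 0) := by
  induction n generalizing m with
  | zero =>
    cases m with
    | zero => simp [gram_zero_zero hνα]
    | succ m => simp [gram_succ hνα]
  | succ n ih =>
    cases m with
    | zero => rw [← conj_gram, gram_succ hνα]; simp
    | succ m =>
      rw [gram_succ hνα, Nat.add_sub_cancel, ih m]
      simp only [Nat.add_right_cancel_iff, Nat.factorial_succ]
      push_cast
      split_ifs <;> ring

end ComplexHermite

open ComplexHermite in
theorem stmt8_general (ν α : ℝ) (hνα : 2 * |α| < ν) (m n : ℕ) :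
    ∫ z : ℂ,
        Ic (ν : ℂ) (α : ℂ) 0 z (starRingEnd ℂ z) m *
          starRingEnd ℂ (Ic (ν : ℂ) (α : ℂ) 0 z (starRingEnd ℂ z) n) *
          Complex.exp (-(ν : ℂ) * ((‖z‖ : ℝ) : ℂ) ^ 2
            + (α : ℂ) * (z ^ 2 + (starRingEnd ℂ z) ^ 2)) =
      ((Real.pi * ν ^ n * n.factorial / Real.sqrt (ν ^ 2 - 4 * α ^ 2) : ℝ) : ℂ) *
        (if m = n then 1 else 0) :=
  gram_eq hνα m n

theorem stmt8 (ν α : ℝ) (hν : 0 < ν) (hνα : 2 * |α| < ν) (m n : ℕ) :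
    ∫ z : ℂ,
        Ic (ν : ℂ) (α : ℂ) 0 z (starRingEnd ℂ z) m *
          starRingEnd ℂ (Ic (ν : ℂ) (α : ℂ) 0 z (starRingEnd ℂ z) n) *
          Complex.exp (-(ν : ℂ) * ((‖z‖ : ℝ) : ℂ) ^ 2
            + (α : ℂ) * (z ^ 2 + (starRingEnd ℂ z) ^ 2)) =
      ((Real.pi * ν ^ n * n.factorial / Real.sqrt (ν ^ 2 - 4 * α ^ 2) : ℝ) : ℂ) *
        (if m = n then 1 else 0) :=
  stmt8_general ν α hνα m n
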